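/- arXiv:1806.06047 — 3 statements merged into one kernel-verified Lean document; each statement's English description precedes it below -/
import Mathlib

section
/- For all u, v ∈ (0,1), the Kullback–Leibler divergence between Bernoulli distributions satisfies D(u‖v) ≥ (u − v)² / (2·max{u,v}), where D(u‖v) = u·ln(u/v) + (1−u)·ln((1−u)/(1−v)). -/
/-- KL divergence between Bernoulli(u) and Bernoulli(v). -/
noncomputable def bernoulliKL (u v : ℝ) : ℝ :=
  u * Real.log (u / v) + (1 - u) * Real.log ((1 - u) / (1 - v))

/-!
With `klFun t = t log t + 1 - t` one has `b * klFun (a / b) = a log (a / b) + b - a`, so the linear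
terms cancel in `D(u‖v) = v * klFun (u / v) + (1 - v) * klFun ((1 - u) / (1 - v))`. Both summands
are nonnegative, and since `klFun'' s = 1 / s ≥ 1 / max 1 t` for `s` between `1` and `t`, the
second-order bound `klFun t ≥ (t - 1)² / (2 max 1 t)` holds; scaled by `v`, it bounds the first
summand by `(u - v)² / (2 max u v)`.
-/

open Real Set InformationTheory

lemma sq_sub_one_div_two_le_klFun {t : ℝ} (ht₀ : 0 ≤ t) (ht₁ : t ≤ 1) :
    (t - 1) ^ 2 / 2 ≤ klFun t := by
  let g (s : ℝ) : ℝ := klFun s - (s - 1) ^ 2 / 2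
  have hg : AntitoneOn g (Icc t 1) := by
    refine antitoneOn_of_hasDerivWithinAt_nonpos (f' := fun s ↦ log s - (s - 1)) (convex_Icc t 1)
      (by fun_prop) (fun s hs ↦ ?_) (fun s hs ↦ ?_) <;> rw [interior_Icc] at hs
    · have hs₀ : s ≠ 0 := (ht₀.trans_lt hs.1).ne'
      have hd := (hasDerivAt_klFun hs₀).sub (((hasDerivAt_id s).sub_const 1).pow 2 |>.div_const 2)
      exact (hd.congr_deriv (by simp)).hasDerivWithinAt
    · linarith [log_le_sub_one_of_pos (ht₀.trans_lt hs.1)]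
  have := hg ⟨le_rfl, ht₁⟩ ⟨ht₁, le_rfl⟩ ht₁
  simp only [g, klFun_one] at this
  linarith

lemma sq_sub_one_le_two_mul_mul_klFun {t : ℝ} (ht : 1 ≤ t) :
    (t - 1) ^ 2 ≤ 2 * t * klFun t := by
  let g (s : ℝ) : ℝ := 2 * s * klFun s - (s - 1) ^ 2
  have hg : MonotoneOn g (Ici 1) := by
    refine monotoneOn_of_hasDerivWithinAt_nonneg (f' := fun s ↦ 4 * klFun s) (convex_Ici 1)
      (by fun_prop) (fun s hs ↦ ?_) (fun s hs ↦ ?_) <;> rw [interior_Ici] at hs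
    · have hs₀ : s ≠ 0 := (zero_lt_one.trans hs).ne'
      have hd := (((hasDerivAt_id s).const_mul 2).mul (hasDerivAt_klFun hs₀)).sub
        (((hasDerivAt_id s).sub_const 1).pow 2)
      exact (hd.congr_deriv (by simp [klFun_apply]; ring)).hasDerivWithinAt
    · linarith [klFun_nonneg (zero_le_one.trans hs.le)]
  have := hg self_mem_Ici ht ht
  simp only [g, klFun_one] at this
  linarith

lemma sq_sub_one_div_two_mul_max_le_klFun {t : ℝ} (ht : 0 ≤ t) :
    (t - 1) ^ 2 / (2 * max 1 t) ≤ klFun t := by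
  rcases le_total t 1 with ht₁ | ht₁
  · simpa [max_eq_left ht₁] using sq_sub_one_div_two_le_klFun ht ht₁
  · rw [max_eq_right ht₁, div_le_iff₀ (by positivity), mul_comm]
    exact sq_sub_one_le_two_mul_mul_klFun ht₁

lemma mul_klFun_div {a b : ℝ} (hb : b ≠ 0) : b * klFun (a / b) = a * log (a / b) + b - a := by
  rw [klFun_apply]; field_simp

lemma sq_sub_div_two_mul_max_le_mul_klFun_div {a b : ℝ} (ha : 0 ≤ a) (hb : 0 < b) :
    (a - b) ^ 2 / (2 * max a b) ≤ b * klFun (a / b) := calc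
  (a - b) ^ 2 / (2 * max a b) = b * ((a / b - 1) ^ 2 / (2 * max 1 (a / b))) := by
    have hmax : max 1 (a / b) = max a b / b := by
      rw [← max_div_div_right hb.le, div_self hb.ne', max_comm]
    have : 0 < max a b := lt_max_of_lt_right hb
    rw [hmax]
    field_simp
  _ ≤ b * klFun (a / b) := by
    gcongr
    exact sq_sub_one_div_two_mul_max_le_klFun (div_nonneg ha hb.le)

/-- For all `u, v ∈ (0,1)`,
`D(u‖v) ≥ (u - v)² / (2 max{u,v})`. -/
theorem bernoulliKL_lower_bound (u v : ℝ)
    (hu : u ∈ Set.Ioo (0:ℝ) 1) (hv : v ∈ Set.Ioo (0:ℝ) 1) :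
    (u - v) ^ 2 / (2 * max u v) ≤ bernoulliKL u v := by
  obtain ⟨hu₀, hu₁⟩ := hu
  obtain ⟨hv₀, hv₁⟩ := hv
  have hv₁_sub : 0 < 1 - v := by linarith
  have first := sq_sub_div_two_mul_max_le_mul_klFun_div hu₀.le hv₀
  have second : 0 ≤ (1 - v) * klFun ((1 - u) / (1 - v)) :=
    mul_nonneg hv₁_sub.le (klFun_nonneg (div_nonneg (by linarith) hv₁_sub.le))
  rw [mul_klFun_div hv₀.ne'] at first
  rw [mul_klFun_div hv₁_sub.ne'] at second
  unfold bernoulliKL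
  linarith
end

section
/- For u ∈ (0,1) and Δ > 0 with Δ ≤ u, define V(u,Δ) = max{ v ∈ [u,1] : D(u‖v) ≤ Δ } where D is the Bernoulli KL divergence. If u + √(9uΔ) ≤ 1 then V(u,Δ) ≤ u + √(9uΔ). -/
theorem Real.log_le_sub_inv_div_two {t : ℝ} (ht : 1 ≤ t) : Real.log t ≤ (t - t⁻¹) / 2 := by
  rw [← Real.sinh_log (by linarith)]
  exact Real.self_le_sinh_iff.2 (Real.log_nonneg ht)

theorem sq_sub_div_le_bernoulliKL {u v : ℝ} (hu : 0 < u) (huv : u ≤ v) (hv : v < 1) :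
    (v - u) ^ 2 / (2 * v) ≤ bernoulliKL u v := by
  have hv0 : 0 < v := hu.trans_le huv
  have hu1 : 0 < 1 - u := by linarith
  have hv1 : 0 < 1 - v := by linarith
  have hfirst : -((v ^ 2 - u ^ 2) / (2 * v)) ≤ u * Real.log (u / v) := by
    have hlog := Real.log_le_sub_inv_div_two ((one_le_div hu).2 huv)
    have hmul := mul_le_mul_of_nonneg_left hlog hu.le
    have hflip : Real.log (u / v) = -Real.log (v / u) := by rw [← Real.log_inv, inv_div]
    have hrhs : u * ((v / u - (v / u)⁻¹) / 2) = (v ^ 2 - u ^ 2) / (2 * v) := by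
      field_simp
    rw [hflip]
    linarith
  have hsecond : v - u ≤ (1 - u) * Real.log ((1 - u) / (1 - v)) := by
    have hlog := Real.one_sub_inv_le_log_of_pos (div_pos hu1 hv1)
    have hmul := mul_le_mul_of_nonneg_left hlog hu1.le
    have hlhs : (1 - u) * (1 - ((1 - u) / (1 - v))⁻¹) = v - u := by
      field_simp
      ring
    linarith
  have hsum : (v - u) ^ 2 / (2 * v) = v - u - (v ^ 2 - u ^ 2) / (2 * v) := by
    field_simp
    ring
  unfold bernoulliKL
  linarith

theorem sq_le_eight_mul_of_sq_le_two_mul_add_mul {w u Δ : ℝ} (hΔ : 0 ≤ Δ) (hΔu : Δ ≤ u)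
    (h : w ^ 2 ≤ 2 * (u + w) * Δ) : w ^ 2 ≤ 8 * u * Δ := by
  nlinarith [sq_nonneg (w - 2 * Δ), mul_le_mul_of_nonneg_left hΔu hΔ]

theorem le_add_sqrt_of_bernoulliKL_le {u v Δ : ℝ} (hu : 0 < u) (hΔ : 0 ≤ Δ) (hΔu : Δ ≤ u)
    (huv : u ≤ v) (hv : v < 1) (hkl : bernoulliKL u v ≤ Δ) :
    v ≤ u + Real.sqrt (8 * u * Δ) := by
  have hv0 : 0 < v := hu.trans_le huv
  have hsq : (v - u) ^ 2 ≤ 2 * (u + (v - u)) * Δ := by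
    have := (sq_sub_div_le_bernoulliKL hu huv hv).trans hkl
    rw [div_le_iff₀ (by positivity)] at this
    linarith
  have := Real.le_sqrt_of_sq_le (sq_le_eight_mul_of_sq_le_two_mul_add_mul hΔ hΔu hsq)
  linarith

theorem ucb_upper_bound_general (u Δ : ℝ) (hu : u ∈ Set.Ioo (0:ℝ) 1)
    (hΔpos : 0 < Δ) (hΔu : Δ ≤ u) :
    sSup {v | v ∈ Set.Ico u 1 ∧ bernoulliKL u v ≤ Δ}
      ≤ u + Real.sqrt (9 * u * Δ) := by
  have hsqrt : Real.sqrt (8 * u * Δ) ≤ Real.sqrt (9 * u * Δ) :=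
    Real.sqrt_le_sqrt (by nlinarith [hu.1])
  refine Real.sSup_le ?_ (add_nonneg hu.1.le (Real.sqrt_nonneg _))
  rintro v ⟨⟨huv, hv⟩, hkl⟩
  linarith [le_add_sqrt_of_bernoulliKL_le hu.1 hΔpos.le hΔu huv hv hkl]

/-- Let `V(u,Δ) = max{v ∈ [u,1] : D(u‖v) ≤ Δ}` (note `D(u‖1) = +∞`,
so the constraint set lies in `[u,1)`). For `u ∈ (0,1)`, `0 < Δ ≤ u`, if
`u + √(9uΔ) ≤ 1` then `V(u,Δ) ≤ u + √(9uΔ)`. -/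
theorem ucb_upper_bound (u Δ : ℝ) (hu : u ∈ Set.Ioo (0:ℝ) 1)
    (hΔpos : 0 < Δ) (hΔu : Δ ≤ u)
    (hin : u + Real.sqrt (9 * u * Δ) ≤ 1) :
    sSup {v | v ∈ Set.Ico u 1 ∧ bernoulliKL u v ≤ Δ}
      ≤ u + Real.sqrt (9 * u * Δ) :=
  ucb_upper_bound_general u Δ hu hΔpos hΔu
end

section
/- Let P be reversible, irreducible, aperiodic and lazy on finite Ω with eigenvalues 1 = λ₁ > λ₂ ≥ λ₃ ≥ … ≥ λ_{|Ω|} ≥ 0 and λ₃ > 0, and m_k = (1/|Ω|)∑ᵢ λᵢ^k. Then for all k ≥ 1, (|Ω|·m_k − 1)^{1/k} ≤ λ₂ + (λ₂|Ω|/k)·(λ₃/λ₂)^k; in particular the bias E_{k,1} := (|Ω|·m_k − 1)^{1/k} − λ₂ satisfies E_{k,1} ≤ (|Ω|/k)·(λ₃/λ₂)^k. -/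
/-!
Eigenvalues are indexed from `0`, so `λ₂, λ₃` are `lam 1, lam 2`. After removing the top
eigenvalue, `n·m_k - 1 = λ₂^k + ∑_{i≥3} λᵢ^k` lies between `0` and `λ₂^k + n·λ₃^k`. The `k`-th
root is concave, so it lies below its tangent line at `λ₂^k`; by Bernoulli's inequality
`λ₂^k (1 + k t) ≤ (λ₂ (1 + t))^k`, this gives `(λ₂^k + b)^{1/k} ≤ λ₂ + (λ₂/k)·b/λ₂^k`, and
`b = n·λ₃^k` yields the bound. Since `λ₂ ≤ 1`, the bias bound follows.
-/

open Finset

theorem rpow_one_div_pow_add_le {a b : ℝ} {k : ℕ} (ha : 0 < a) (hab : 0 ≤ a ^ k + b) (hk : k ≠ 0) :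
    (a ^ k + b) ^ ((1 : ℝ) / k) ≤ a + a / k * (b / a ^ k) := by
  have hkR : (1 : ℝ) ≤ k := by exact_mod_cast Nat.one_le_iff_ne_zero.mpr hk
  have hak : 0 < a ^ k := pow_pos ha k
  set t := b / (k * a ^ k) with ht
  have hsplit : a ^ k + b = a ^ k * (1 + k * t) := by
    rw [ht]; field_simp
  have hkt : -1 ≤ k * t := by nlinarith [hsplit]
  have ht1 : -1 ≤ t := by nlinarith
  have hbern : a ^ k + b ≤ (a * (1 + t)) ^ k := by
    rw [hsplit, mul_pow]
    gcongr
    exact one_add_mul_le_pow (by linarith) k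
  calc (a ^ k + b) ^ ((1 : ℝ) / k)
      ≤ ((a * (1 + t)) ^ k) ^ ((k : ℝ)⁻¹) := by
        rw [one_div]; exact Real.rpow_le_rpow hab hbern (by positivity)
    _ = a * (1 + t) := Real.pow_rpow_inv_natCast (by nlinarith) hk
    _ = a + a / k * (b / a ^ k) := by rw [ht]; field_simp

theorem Fin.sum_univ_eq_add_add_sum_succ_succ {M : Type*} [AddCommMonoid M] {m : ℕ}
    (f : Fin (m + 2) → M) : ∑ i, f i = f 0 + (f 1 + ∑ i : Fin m, f i.succ.succ) := by
  rw [Fin.sum_univ_succ, Fin.sum_univ_succ]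
  rfl

section Antitone

variable {m : ℕ} {lam : Fin (m + 3) → ℝ}

theorem pow_add_pow_le_sum_pow (hnonneg : ∀ i, 0 ≤ lam i) (k : ℕ) :
    lam 0 ^ k + lam 1 ^ k ≤ ∑ i, lam i ^ k := by
  have htail : 0 ≤ ∑ i : Fin (m + 1), lam i.succ.succ ^ k :=
    sum_nonneg fun i _ => pow_nonneg (hnonneg _) k
  rw [Fin.sum_univ_eq_add_add_sum_succ_succ]
  linarith

theorem sum_pow_le_of_antitone (hmono : Antitone lam) (hnonneg : ∀ i, 0 ≤ lam i) (k : ℕ) :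
    ∑ i, lam i ^ k ≤ lam 0 ^ k + lam 1 ^ k + (m + 1) * lam 2 ^ k := by
  have htail : ∑ i : Fin (m + 1), lam i.succ.succ ^ k ≤ (m + 1) * lam 2 ^ k := by
    calc ∑ i : Fin (m + 1), lam i.succ.succ ^ k
        ≤ ∑ _i : Fin (m + 1), lam 2 ^ k :=
          sum_le_sum fun i _ => pow_le_pow_left₀ (hnonneg _) (hmono (Fin.le_def.mpr (by
            simp [Nat.mod_eq_of_lt (by omega : 2 < m + 3)]))) k
      _ = (m + 1) * lam 2 ^ k := by simp
  rw [Fin.sum_univ_eq_add_add_sum_succ_succ]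
  linarith

theorem sum_pow_sub_one_rpow_le (hmono : Antitone lam) (hnonneg : ∀ i, 0 ≤ lam i)
    (h0 : lam 0 = 1) (h2 : 0 < lam 2) {k : ℕ} (hk : k ≠ 0) :
    (∑ i, lam i ^ k - 1) ^ ((1 : ℝ) / k)
      ≤ lam 1 + lam 1 * ((m + 3 : ℕ) : ℝ) / k * (lam 2 / lam 1) ^ k := by
  have h1 : 0 < lam 1 :=
    h2.trans_le (hmono (Fin.le_def.mpr (by simp [Nat.mod_eq_of_lt (by omega : 2 < m + 3)])))
  have hlower := pow_add_pow_le_sum_pow hnonneg k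
  have hupper := sum_pow_le_of_antitone hmono hnonneg k
  rw [h0, one_pow] at hlower hupper
  have htangent := rpow_one_div_pow_add_le (b := ((m + 3 : ℕ) : ℝ) * lam 2 ^ k) h1
    (by positivity) hk
  have hrhs : lam 1 / k * (((m + 3 : ℕ) : ℝ) * lam 2 ^ k / lam 1 ^ k)
      = lam 1 * ((m + 3 : ℕ) : ℝ) / k * (lam 2 / lam 1) ^ k := by
    rw [div_pow]; ring
  refine hrhs ▸ (Real.rpow_le_rpow (by linarith [pow_pos h1 k]) ?_ (by positivity)).trans htangent
  push_cast
  nlinarith [pow_nonneg h2.le k]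

end Antitone

/-- With eigenvalues `1 = λ₁ > λ₂ ≥ λ₃ ≥ … ≥ λ_n ≥ 0`, `λ₃ > 0`,
and `m_k = (1/n) ∑ᵢ λᵢ^k`, for all `k ≥ 1`:
`(n·m_k - 1)^{1/k} ≤ λ₂ + (λ₂·n/k)·(λ₃/λ₂)^k`, and in particular the bias
`(n·m_k - 1)^{1/k} - λ₂ ≤ (n/k)·(λ₃/λ₂)^k`. -/
theorem bias_upper_bound
    {n : ℕ} (hn : 3 ≤ n)
    (lam : Fin n → ℝ)
    (hmono : Antitone lam)
    (hlam1 : lam ⟨0, by omega⟩ = 1)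
    (hlam2 : lam ⟨1, by omega⟩ < 1)
    (hlam3pos : 0 < lam ⟨2, by omega⟩)
    (hlamNonneg : ∀ i, 0 ≤ lam i)
    (m : ℕ → ℝ)
    (hm : ∀ k, m k = (1 / (n:ℝ)) * ∑ i, lam i ^ k) :
    ∀ k : ℕ, 1 ≤ k →
      ((n:ℝ) * m k - 1) ^ ((1:ℝ)/k)
        ≤ lam ⟨1, by omega⟩
          + (lam ⟨1, by omega⟩ * (n:ℝ) / k) * (lam ⟨2, by omega⟩ / lam ⟨1, by omega⟩) ^ k
      ∧ ((n:ℝ) * m k - 1) ^ ((1:ℝ)/k) - lam ⟨1, by omega⟩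
          ≤ ((n:ℝ) / k) * (lam ⟨2, by omega⟩ / lam ⟨1, by omega⟩) ^ k := by
  intro k hk
  obtain ⟨j, rfl⟩ : ∃ j, n = j + 3 := ⟨n - 3, by omega⟩
  change lam 0 = 1 at hlam1
  change lam 1 < 1 at hlam2
  change 0 < lam 2 at hlam3pos
  change _ ≤ lam 1 + lam 1 * _ / k * (lam 2 / lam 1) ^ k ∧ _ - lam 1 ≤ _ * (lam 2 / lam 1) ^ k
  have hS : ((j + 3 : ℕ) : ℝ) * m k - 1 = ∑ i, lam i ^ k - 1 := by
    rw [hm k]; field_simp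
  have hroot := sum_pow_sub_one_rpow_le hmono hlamNonneg hlam1 hlam3pos (by omega : k ≠ 0)
  rw [← hS] at hroot
  have hbias : lam 1 * ((j + 3 : ℕ) : ℝ) / k * (lam 2 / lam 1) ^ k
      ≤ ((j + 3 : ℕ) : ℝ) / k * (lam 2 / lam 1) ^ k := by
    rw [mul_div_assoc]
    have hratio : 0 ≤ lam 2 / lam 1 := div_nonneg (hlamNonneg 2) (hlamNonneg 1)
    exact mul_le_mul_of_nonneg_right (mul_le_of_le_one_left (by positivity) hlam2.le)
      (by positivity)
  exact ⟨hroot, by linarith⟩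
end
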